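/- arXiv:1712.02510 — 4 statements merged into one kernel-verified Lean document; each statement's English description precedes it below -/
import Mathlib

section
/- Let ρ : ℝ³ → ℝ be a smooth, ℤ³-periodic function with ρ(x) > 0 for every x. Then ∫_{[0,1]³} ρ(x) |∇² log ρ(x)|² dx ≥ (1/7) ∫_{[0,1]³} |∇² √(ρ(x))|² dx. -/
open MeasureTheory

/-- Partial derivative in direction `i` of a function on `ℝ³` (realized as `Fin 3 → ℝ`). -/
noncomputable def pd (i : Fin 3) (f : (Fin 3 → ℝ) → ℝ) (x : Fin 3 → ℝ) : ℝ :=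
  fderiv ℝ f x (Pi.single i 1)

abbrev E3 := Fin 3 → ℝ

lemma pd_congr {f g : E3 → ℝ} (i : Fin 3) (h : f = g) (x : E3) : pd i f x = pd i g x := by rw [h]

lemma contDiff_pd (i : Fin 3) {f : E3 → ℝ} (hf : ContDiff ℝ (⊤ : ℕ∞) f) : ContDiff ℝ (⊤ : ℕ∞) (pd i f) :=
  (hf.fderiv_right (by simp)).clm_apply contDiff_const

lemma pd_mul {f g : E3 → ℝ} {x : E3} (i : Fin 3) (hf : DifferentiableAt ℝ f x)
    (hg : DifferentiableAt ℝ g x) :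
    pd i (fun y => f y * g y) x = pd i f x * g x + f x * pd i g x := by
  simp only [pd, fderiv_fun_mul hf hg, ContinuousLinearMap.add_apply,
    ContinuousLinearMap.smul_apply, smul_eq_mul]
  ring

lemma pd_const_mul {f : E3 → ℝ} {x : E3} (i : Fin 3) (c : ℝ)
    (hf : DifferentiableAt ℝ f x) :
    pd i (fun y => c * f y) x = c * pd i f x := by
  simp only [pd, fderiv_const_mul hf c, ContinuousLinearMap.smul_apply, smul_eq_mul]

lemma pd_inv {f : E3 → ℝ} {x : E3} (i : Fin 3) (hf : DifferentiableAt ℝ f x)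
    (hx : f x ≠ 0) :
    pd i (fun y => (f y)⁻¹) x = -pd i f x / f x ^ 2 := by
  have h : HasFDerivAt (fun y => (f y)⁻¹) ((-(f x ^ 2)⁻¹) • fderiv ℝ f x) x :=
    (hasDerivAt_inv hx).comp_hasFDerivAt x hf.hasFDerivAt
  simp only [pd, h.fderiv]
  simp only [ContinuousLinearMap.smul_apply, smul_eq_mul]; ring

lemma pd_log {f : E3 → ℝ} {x : E3} (i : Fin 3) (hf : DifferentiableAt ℝ f x)
    (hx : f x ≠ 0) :
    pd i (fun y => Real.log (f y)) x = pd i f x / f x := by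
  have h := hf.hasFDerivAt.log hx
  simp only [pd, h.fderiv]
  simp only [ContinuousLinearMap.smul_apply, smul_eq_mul]; field_simp

lemma pd_sum {f : Fin 3 → E3 → ℝ} {x : E3} (i : Fin 3)
    (hf : ∀ j, DifferentiableAt ℝ (f j) x) :
    pd i (fun y => ∑ j, f j y) x = ∑ j, pd i (f j) x := by
  have h : HasFDerivAt (fun y => ∑ j : Fin 3, f j y) (∑ j : Fin 3, fderiv ℝ (f j) x) x :=
    HasFDerivAt.fun_sum (fun j _ => (hf j).hasFDerivAt)
  simp [pd, h.fderiv]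

lemma fderiv_shift (f : E3 → ℝ) (hf : Differentiable ℝ f) (x c : E3) :
    fderiv ℝ (fun y => f (y + c)) x = fderiv ℝ f (x + c) := by
  have ht : HasFDerivAt (fun y : E3 => y + c) (ContinuousLinearMap.id ℝ E3) x :=
    (hasFDerivAt_id x).add_const c
  have h := (hf (x + c)).hasFDerivAt.comp x ht
  simpa [Function.comp_def] using h.fderiv

lemma pd_periodic {f : E3 → ℝ} (hf : ContDiff ℝ (⊤ : ℕ∞) f)
    (hp : ∀ (x : E3) (k : Fin 3 → ℤ), f (x + fun i => (k i : ℝ)) = f x) (j : Fin 3) :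
    ∀ (x : E3) (k : Fin 3 → ℤ), pd j f (x + fun i => (k i : ℝ)) = pd j f x := by
  intro x k
  have hfe : (fun y => f (y + fun i => (k i : ℝ))) = f := funext fun y => hp y k
  have := fderiv_shift f (hf.differentiable (by simp)) x (fun i => (k i : ℝ))
  rw [hfe] at this
  simp only [pd, ← this]

lemma key_alg (u : ℝ) (hu : 0 < u) (g : Fin 3 → ℝ) (H : Fin 3 → Fin 3 → ℝ) :
    (1/7) * (∑ i, ∑ j, (H i j)^2)
      ≤ u^2 * (∑ i, ∑ j, (2*(H i j)/u - 2*(g i)*(g j)/u^2)^2)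
        + 2 * (∑ j, (((∑ i, (H j i * g i + g i * H j i)) * g j
              + (∑ i, g i * g i) * H j j) * u⁻¹
            + ((∑ i, g i * g i) * g j) * (-(g j) / u^2))) := by
  have hne : u ≠ 0 := hu.ne'
  set s : ℝ := g 0^2 + g 1^2 + g 2^2 with hs
  have key : u^2 * (∑ i, ∑ j, (2*(H i j)/u - 2*(g i)*(g j)/u^2)^2)
        + 2 * (∑ j, (((∑ i, (H j i * g i + g i * H j i)) * g j
              + (∑ i, g i * g i) * H j j) * u⁻¹
            + ((∑ i, g i * g i) * g j) * (-(g j) / u^2)))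
        - (1/7) * (∑ i, ∑ j, (H i j)^2)
      = (((3*u*H 0 0 + 2*s - 4*g 0*g 0)^2 + (3*u*H 0 1 - 4*g 0*g 1)^2
          + (3*u*H 0 2 - 4*g 0*g 2)^2 + (3*u*H 1 0 - 4*g 1*g 0)^2
          + (3*u*H 1 1 + 2*s - 4*g 1*g 1)^2 + (3*u*H 1 2 - 4*g 1*g 2)^2
          + (3*u*H 2 0 - 4*g 2*g 0)^2 + (3*u*H 2 1 - 4*g 2*g 1)^2
          + (3*u*H 2 2 + 2*s - 4*g 2*g 2)^2)/6
        + (33/14)*u^2*(H 0 0^2 + H 0 1^2 + H 0 2^2 + H 1 0^2 + H 1 1^2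
            + H 1 2^2 + H 2 0^2 + H 2 1^2 + H 2 2^2)) / u^2 := by
    simp only [Fin.sum_univ_three, hs]
    field_simp
    ring
  have hC : 0 ≤ (((3*u*H 0 0 + 2*s - 4*g 0*g 0)^2 + (3*u*H 0 1 - 4*g 0*g 1)^2
          + (3*u*H 0 2 - 4*g 0*g 2)^2 + (3*u*H 1 0 - 4*g 1*g 0)^2
          + (3*u*H 1 1 + 2*s - 4*g 1*g 1)^2 + (3*u*H 1 2 - 4*g 1*g 2)^2
          + (3*u*H 2 0 - 4*g 2*g 0)^2 + (3*u*H 2 1 - 4*g 2*g 1)^2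
          + (3*u*H 2 2 + 2*s - 4*g 2*g 2)^2)/6
        + (33/14)*u^2*(H 0 0^2 + H 0 1^2 + H 0 2^2 + H 1 0^2 + H 1 1^2
            + H 1 2^2 + H 2 0^2 + H 2 1^2 + H 2 2^2)) / u^2 := by positivity
  linarith

lemma insert_shift (i : Fin 3) (y : Fin 2 → ℝ) :
    (i.insertNth (0:ℝ) y) + (fun j => ((Pi.single i 1 : Fin 3 → ℤ) j : ℝ))
      = i.insertNth (1:ℝ) y := by
  funext j
  refine Fin.succAboveCases i ?_ ?_ j
  · simp
  · intro k
    simp [Fin.insertNth_apply_succAbove, Pi.single_eq_of_ne (Fin.succAbove_ne i k)]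

lemma integral_div_zero (V : Fin 3 → E3 → ℝ) (hV : ∀ j, ContDiff ℝ (⊤ : ℕ∞) (V j))
    (hper : ∀ (j : Fin 3) (x : E3) (k : Fin 3 → ℤ), V j (x + fun i => (k i : ℝ)) = V j x) :
    ∫ x in Set.Icc (0 : E3) 1, ∑ j, pd j (V j) x = 0 := by
  have hle : (0 : E3) ≤ 1 := fun i => zero_le_one
  have hcont : ∀ j, Continuous (fun x => pd j (V j) x) := by
    intro j
    have h : ContDiff ℝ (⊤ : ℕ∞) (pd j (V j)) := ((hV j).fderiv_right (by simp)).clm_apply contDiff_const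
    exact h.continuous
  have := integral_divergence_of_hasFDerivAt_off_countable (a := (0:E3)) (b := (1:E3))
    hle (fun x j => V j x) (fun x => ContinuousLinearMap.pi fun j => fderiv ℝ (V j) x) ∅
    Set.countable_empty
    (continuousOn_pi.2 fun j => ((hV j).continuous).continuousOn)
    (fun x _ => hasFDerivAt_pi.2 fun j => (((hV j).differentiable (by simp)) x).hasFDerivAt)
    (((continuous_finset_sum Finset.univ fun j _ => hcont j).continuousOn).integrableOn_compact
      isCompact_Icc)
  have hl : (∫ x in Set.Icc (0:E3) 1, ∑ j, pd j (V j) x)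
      = ∫ x in Set.Icc (0:E3) 1,
          ∑ i, (ContinuousLinearMap.pi fun j => fderiv ℝ (V j) x) (Pi.single i 1) i := rfl
  rw [hl, this]
  refine Finset.sum_eq_zero fun i _ => ?_
  rw [sub_eq_zero]
  congr 1
  funext y
  have h0 : (fun x j => V j x) (i.insertNth ((1:E3) i) y) i
      = (fun x j => V j x) (i.insertNth ((0:E3) i) y) i := by
    have h1 : ((1:E3) i : ℝ) = 1 := rfl
    have h2 : ((0:E3) i : ℝ) = 0 := rfl
    rw [h1, h2, ← insert_shift i y]
    exact hper i _ _
  exact h0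

/-- If `ρ : ℝ³ → ℝ` is smooth, `ℤ³`-periodic and everywhere positive, then
`∫_{[0,1]³} ρ |∇² log ρ|² ≥ (1/7) ∫_{[0,1]³} |∇² √ρ|²`. -/
theorem inequality_hessian_log_sqrt
    (ρ : (Fin 3 → ℝ) → ℝ)
    (hρ : ContDiff ℝ (⊤ : ℕ∞) ρ)
    (hper : ∀ (x : Fin 3 → ℝ) (k : Fin 3 → ℤ), ρ (x + fun i => (k i : ℝ)) = ρ x)
    (hpos : ∀ x, 0 < ρ x) :
    (1 / 7 : ℝ) *
      ∫ x in Set.Icc (0 : Fin 3 → ℝ) 1,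
        ∑ i, ∑ j, (pd i (fun y => pd j (fun z => Real.sqrt (ρ z)) y) x) ^ 2
    ≤ ∫ x in Set.Icc (0 : Fin 3 → ℝ) 1,
        ρ x * ∑ i, ∑ j, (pd i (fun y => pd j (fun z => Real.log (ρ z)) y) x) ^ 2 := by
  set u : E3 → ℝ := fun z => Real.sqrt (ρ z) with hu_def
  have hρdiff : Differentiable ℝ ρ := hρ.differentiable (by simp)
  have hu : ContDiff ℝ (⊤ : ℕ∞) u := contDiff_iff_contDiffAt.2 fun x => (hρ.contDiffAt).sqrt (hpos x).ne'
  have hupos : ∀ x, 0 < u x := fun x => Real.sqrt_pos.2 (hpos x)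
  have hudiff : Differentiable ℝ u := hu.differentiable (by simp)
  have hρu : ρ = fun z => u z * u z := funext fun z => (Real.mul_self_sqrt (hpos z).le).symm
  have hgdiff : ∀ j, Differentiable ℝ (pd j u) :=
    fun j => (contDiff_pd j hu).differentiable (by simp)
  have huper : ∀ (x : E3) (k : Fin 3 → ℤ), u (x + fun i => (k i : ℝ)) = u x := by
    intro x k
    show Real.sqrt (ρ (x + fun i => (k i : ℝ))) = Real.sqrt (ρ x)
    rw [hper x k]
  have hgper : ∀ (j : Fin 3) (x : E3) (k : Fin 3 → ℤ),
      pd j u (x + fun i => (k i : ℝ)) = pd j u x := fun j => pd_periodic hu huper j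
  have hlogC : ContDiff ℝ (⊤ : ℕ∞) (fun z => Real.log (ρ z)) :=
    contDiff_iff_contDiffAt.2 fun x => (hρ.contDiffAt).log (hpos x).ne'
  -- first derivative of log ρ
  have hlog1 : ∀ j : Fin 3, (fun y => pd j (fun z => Real.log (ρ z)) y)
      = fun y => (2 * pd j u y) * (u y)⁻¹ := by
    intro j; funext y
    have hd : pd j (fun z => Real.log (ρ z)) y = pd j ρ y / ρ y :=
      pd_log j (hρdiff y) (hpos y).ne'
    have hd2 : pd j ρ y = pd j u y * u y + u y * pd j u y := by
      have h := pd_congr j hρu y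
      rw [h, pd_mul j (hudiff y) (hudiff y)]
    have hρy : ρ y = u y * u y := by rw [hρu]
    show pd j (fun z => Real.log (ρ z)) y = (2 * pd j u y) * (u y)⁻¹
    rw [hd, hd2, hρy]
    have hne : u y ≠ 0 := (hupos y).ne'
    field_simp
    ring
  -- second derivatives of log ρ
  have hlog2 : ∀ (i j : Fin 3) (x : E3),
      pd i (fun y => pd j (fun z => Real.log (ρ z)) y) x
        = (2 * pd i (pd j u) x) * (u x)⁻¹ + (2 * pd j u x) * (-pd i u x / u x ^ 2) := by
    intro i j x
    have h1 : pd i (fun y => pd j (fun z => Real.log (ρ z)) y) x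
        = pd i (fun y => (2 * pd j u y) * (u y)⁻¹) x := pd_congr i (hlog1 j) x
    have hf1 : DifferentiableAt ℝ (fun y => 2 * pd j u y) x := (hgdiff j x).const_mul 2
    have hf2 : DifferentiableAt ℝ (fun y => (u y)⁻¹) x := (hudiff x).inv (hupos x).ne'
    rw [h1, pd_mul i hf1 hf2, pd_const_mul i 2 (hgdiff j x),
      pd_inv i (hudiff x) (hupos x).ne']
  -- the vector field and its divergence
  have hsdiff : ∀ x : E3, DifferentiableAt ℝ (fun y => ∑ i, pd i u y * pd i u y) x := by
    intro x
    exact DifferentiableAt.fun_sum fun i _ => (hgdiff i x).mul (hgdiff i x)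
  have hdivV : ∀ (j : Fin 3) (x : E3),
      pd j (fun y => (∑ i, pd i u y * pd i u y) * pd j u y * (u y)⁻¹) x
        = ((∑ i, (pd j (pd i u) x * pd i u x + pd i u x * pd j (pd i u) x)) * pd j u x
            + (∑ i, pd i u x * pd i u x) * pd j (pd j u) x) * (u x)⁻¹
          + ((∑ i, pd i u x * pd i u x) * pd j u x) * (-pd j u x / u x ^ 2) := by
    intro j x
    have hsg : DifferentiableAt ℝ (fun y => (∑ i, pd i u y * pd i u y) * pd j u y) x :=
      (hsdiff x).mul (hgdiff j x)
    have hinv : DifferentiableAt ℝ (fun y => (u y)⁻¹) x := (hudiff x).inv (hupos x).ne'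
    have hps : pd j (fun y => ∑ i, pd i u y * pd i u y) x
        = ∑ i, (pd j (pd i u) x * pd i u x + pd i u x * pd j (pd i u) x) := by
      calc pd j (fun y => ∑ i, pd i u y * pd i u y) x
          = ∑ i, pd j (fun y => pd i u y * pd i u y) x :=
            pd_sum j (fun i => (hgdiff i x).mul (hgdiff i x))
        _ = ∑ i, (pd j (pd i u) x * pd i u x + pd i u x * pd j (pd i u) x) :=
            Finset.sum_congr rfl fun i _ => pd_mul j (hgdiff i x) (hgdiff i x)
    calc pd j (fun y => (∑ i, pd i u y * pd i u y) * pd j u y * (u y)⁻¹) x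
        = pd j (fun y => (∑ i, pd i u y * pd i u y) * pd j u y) x * (u x)⁻¹
            + ((∑ i, pd i u x * pd i u x) * pd j u x) * pd j (fun y => (u y)⁻¹) x :=
          pd_mul j hsg hinv
      _ = (pd j (fun y => ∑ i, pd i u y * pd i u y) x * pd j u x
            + (∑ i, pd i u x * pd i u x) * pd j (pd j u) x) * (u x)⁻¹
          + ((∑ i, pd i u x * pd i u x) * pd j u x) * (-pd j u x / u x ^ 2) := by
          rw [pd_mul j (hsdiff x) (hgdiff j x), pd_inv j (hudiff x) (hupos x).ne']
      _ = ((∑ i, (pd j (pd i u) x * pd i u x + pd i u x * pd j (pd i u) x)) * pd j u x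
            + (∑ i, pd i u x * pd i u x) * pd j (pd j u) x) * (u x)⁻¹
          + ((∑ i, pd i u x * pd i u x) * pd j u x) * (-pd j u x / u x ^ 2) := by
          rw [hps]
  -- pointwise inequality
  have hpoint : ∀ x : E3,
      (1/7) * (∑ i, ∑ j, (pd i (fun y => pd j u y) x)^2)
        ≤ ρ x * (∑ i, ∑ j, (pd i (fun y => pd j (fun z => Real.log (ρ z)) y) x)^2)
          + 2 * (∑ j, pd j (fun y => (∑ i, pd i u y * pd i u y) * pd j u y * (u y)⁻¹) x) := by
    intro x
    have hk := key_alg (u x) (hupos x) (fun i => pd i u x) (fun i j => pd i (pd j u) x)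
    have h1 : ρ x * (∑ i, ∑ j, (pd i (fun y => pd j (fun z => Real.log (ρ z)) y) x)^2)
        = (u x)^2 * (∑ i, ∑ j,
            (2*(pd i (pd j u) x)/(u x) - 2*(pd i u x)*(pd j u x)/(u x)^2)^2) := by
      have hρy : ρ x = u x * u x := by rw [hρu]
      rw [hρy, show u x * u x = (u x)^2 by ring]
      congr 1
      refine Finset.sum_congr rfl fun i _ => Finset.sum_congr rfl fun j _ => ?_
      rw [hlog2 i j x]
      ring
    have h2 : (∑ j, pd j (fun y => (∑ i, pd i u y * pd i u y) * pd j u y * (u y)⁻¹) x)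
        = ∑ j, (((∑ i, (pd j (pd i u) x * pd i u x + pd i u x * pd j (pd i u) x)) * pd j u x
            + (∑ i, pd i u x * pd i u x) * pd j (pd j u) x) * (u x)⁻¹
          + ((∑ i, pd i u x * pd i u x) * pd j u x) * (-pd j u x / u x ^ 2)) :=
      Finset.sum_congr rfl fun j _ => hdivV j x
    rw [h1, h2]
    exact hk
  -- smoothness of the vector field
  have hVc : ∀ j : Fin 3,
      ContDiff ℝ (⊤ : ℕ∞) (fun y => (∑ i, pd i u y * pd i u y) * pd j u y * (u y)⁻¹) := by
    intro j
    have hsC : ContDiff ℝ (⊤ : ℕ∞) (fun y => ∑ i, pd i u y * pd i u y) :=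
      ContDiff.sum fun i _ => (contDiff_pd i hu).mul (contDiff_pd i hu)
    exact (hsC.mul (contDiff_pd j hu)).mul (hu.inv fun x => (hupos x).ne')
  have hVper : ∀ (j : Fin 3) (x : E3) (k : Fin 3 → ℤ),
      (fun y => (∑ i, pd i u y * pd i u y) * pd j u y * (u y)⁻¹)
          (x + fun i => (k i : ℝ))
        = (fun y => (∑ i, pd i u y * pd i u y) * pd j u y * (u y)⁻¹) x := by
    intro j x k
    simp only [hgper _ x k, huper x k]
  have hdiv0 : ∫ x in Set.Icc (0 : E3) 1,
      ∑ j, pd j (fun y => (∑ i, pd i u y * pd i u y) * pd j u y * (u y)⁻¹) x = 0 :=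
    integral_div_zero _ hVc hVper
  -- continuity and integrability
  have hLc : Continuous (fun x : E3 => ∑ i, ∑ j, (pd i (fun y => pd j u y) x)^2) := by
    refine continuous_finset_sum _ fun i _ => continuous_finset_sum _ fun j _ => ?_
    exact (contDiff_pd i (contDiff_pd j hu)).continuous.pow 2
  have hBc : Continuous (fun x : E3 =>
      ρ x * ∑ i, ∑ j, (pd i (fun y => pd j (fun z => Real.log (ρ z)) y) x)^2) := by
    refine hρ.continuous.mul ?_
    refine continuous_finset_sum _ fun i _ => continuous_finset_sum _ fun j _ => ?_
    exact (contDiff_pd i (contDiff_pd j hlogC)).continuous.pow 2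
  have hDc : Continuous (fun x : E3 =>
      ∑ j, pd j (fun y => (∑ i, pd i u y * pd i u y) * pd j u y * (u y)⁻¹) x) :=
    continuous_finset_sum _ fun j _ => (contDiff_pd j (hVc j)).continuous
  have hIL : IntegrableOn (fun x : E3 => ∑ i, ∑ j, (pd i (fun y => pd j u y) x)^2)
      (Set.Icc (0:E3) 1) volume := hLc.continuousOn.integrableOn_compact isCompact_Icc
  have hIB : IntegrableOn (fun x : E3 =>
      ρ x * ∑ i, ∑ j, (pd i (fun y => pd j (fun z => Real.log (ρ z)) y) x)^2)
      (Set.Icc (0:E3) 1) volume := hBc.continuousOn.integrableOn_compact isCompact_Icc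
  have hID : IntegrableOn (fun x : E3 =>
      ∑ j, pd j (fun y => (∑ i, pd i u y * pd i u y) * pd j u y * (u y)⁻¹) x)
      (Set.Icc (0:E3) 1) volume := hDc.continuousOn.integrableOn_compact isCompact_Icc
  -- assemble
  have hmono : (∫ x in Set.Icc (0:E3) 1,
        (1/7) * (∑ i, ∑ j, (pd i (fun y => pd j u y) x)^2))
      ≤ ∫ x in Set.Icc (0:E3) 1,
        (ρ x * (∑ i, ∑ j, (pd i (fun y => pd j (fun z => Real.log (ρ z)) y) x)^2)
          + 2 * (∑ j, pd j (fun y => (∑ i, pd i u y * pd i u y) * pd j u y * (u y)⁻¹) x)) := by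
    refine setIntegral_mono_on (hIL.const_mul _) (hIB.add (hID.const_mul 2))
      measurableSet_Icc (fun x _ => hpoint x)
  rw [integral_const_mul] at hmono
  rw [integral_add hIB (hID.const_mul 2), integral_const_mul, hdiv0, mul_zero, add_zero] at hmono
  exact hmono
end

section
/- For every real n > 0, the function φ̃_n is nondecreasing on [0,∞): if 0 ≤ y₁ ≤ y₂ then φ̃_n(y₁) ≤ φ̃_n(y₂). -/
/-- `C_n = e(1+n)² − 1`. -/
noncomputable def Cn (n : ℝ) : ℝ := Real.exp 1 * (1 + n) ^ 2 - 1

/-- The cut-off function `φ̃_n` of the Mellet–Vasseur argument (Lemma 4.2 of the paper). -/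
noncomputable def phiTilde (n y : ℝ) : ℝ :=
  if y ≤ n then (1 + y) * Real.log (1 + y)
  else if y ≤ Cn n then
    2 * (1 + Real.log (1 + n)) * y - (1 + y) * Real.log (1 + y)
      + 2 * (Real.log (1 + n) - n)
  else Real.exp 1 * (1 + n) ^ 2 - 2 * n - 2

/-- The derivative `φ̃_n'` of the cut-off function `φ̃_n`. -/
noncomputable def Dn (n y : ℝ) : ℝ :=
  if y ≤ n then 1 + Real.log (1 + y)
  else if y ≤ Cn n then 2 * (1 + Real.log (1 + n)) - 1 - Real.log (1 + y)
  else 0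

/-- The second derivative `φ̃_n''` of the cut-off function `φ̃_n`
(away from the junction points `y = n`, `y = C_n`). -/
noncomputable def phi2 (n y : ℝ) : ℝ :=
  if y < n then 1 / (1 + y)
  else if y < Cn n then -(1 / (1 + y))
  else 0

/-!
The three pieces of `φ̃_n` are monotone on their intervals: `(1+y) log(1+y)` is increasing for
`y ≥ 0`; the middle piece has slope `1 + 2 log(1+n) - log(1+y)`, which stays nonnegative exactly
up to `log(1+y) = log(e(1+n)²) = 1 + 2 log(1+n)`, i.e. up to `y = C_n` (convexity of `x log x`
bounds its increments by the slope at the right endpoint); the last piece is constant. Since the pieces match at `y = n` and `y = C_n`, the monotone pieces glue together.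
-/

open Real Set

theorem Real.mul_log_sub_mul_log_le {x y : ℝ} (hx : 0 < x) (hxy : x ≤ y) :
    y * log y - x * log x ≤ (y - x) * (1 + log y) := by
  have hlog : x * (log y - log x) ≤ y - x := by
    have h := log_le_sub_one_of_pos (div_pos (hx.trans_le hxy) hx)
    rw [log_div (hx.trans_le hxy).ne' hx.ne', le_sub_iff_add_le, div_eq_mul_inv] at h
    nlinarith [mul_inv_cancel₀ hx.ne']
  nlinarith

theorem lt_Cn {n : ℝ} (hn : 0 ≤ n) : n < Cn n := by
  have he : 1 < exp 1 := one_lt_exp_iff.mpr one_pos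
  unfold Cn
  nlinarith [mul_pos (sub_pos.mpr he) (pow_pos (by linarith : (0 : ℝ) < 1 + n) 2)]

theorem log_one_add_Cn {n : ℝ} (hn : 1 + n ≠ 0) : log (1 + Cn n) = 1 + 2 * log (1 + n) := by
  rw [Cn, add_sub_cancel, log_mul (exp_pos 1).ne' (pow_ne_zero 2 hn), log_exp, log_pow]
  push_cast
  ring

theorem phiTilde_of_le {n y : ℝ} (hy : y ≤ n) : phiTilde n y = (1 + y) * log (1 + y) :=
  if_pos hy

theorem phiTilde_of_mem_Icc {n y : ℝ} (hy : y ∈ Icc n (Cn n)) :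
    phiTilde n y = 2 * (1 + log (1 + n)) * y - (1 + y) * log (1 + y)
      + 2 * (log (1 + n) - n) := by
  rcases hy.1.eq_or_lt with rfl | hny
  · rw [phiTilde_of_le le_rfl]
    ring
  · rw [phiTilde, if_neg hny.not_ge, if_pos hy.2]

theorem phiTilde_of_Cn_le {n y : ℝ} (hn : 0 ≤ n) (hy : Cn n ≤ y) :
    phiTilde n y = exp 1 * (1 + n) ^ 2 - 2 * n - 2 := by
  rcases hy.eq_or_lt with rfl | hCy
  · rw [phiTilde_of_mem_Icc ⟨(lt_Cn hn).le, le_rfl⟩, log_one_add_Cn (by linarith), Cn]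
    ring
  · rw [phiTilde, if_neg ((lt_Cn hn).trans hCy).not_ge, if_neg hCy.not_ge]

theorem monotoneOn_phiTilde_Icc_zero (n : ℝ) : MonotoneOn (phiTilde n) (Icc 0 n) := by
  have hmono : MonotoneOn (fun y : ℝ ↦ (1 + y) * log (1 + y)) (Icc 0 n) := by
    intro a ha b hb hab
    have he : exp (-1) ≤ 1 := exp_le_one_iff.mpr (by norm_num)
    exact mul_log_strictMonoOn.monotoneOn (show exp (-1) ≤ 1 + a by linarith [ha.1])
      (show exp (-1) ≤ 1 + b by linarith [hb.1]) (by linarith)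
  exact hmono.congr fun y hy ↦ (phiTilde_of_le hy.2).symm

theorem monotoneOn_phiTilde_Icc_Cn {n : ℝ} (hn : -1 < n) :
    MonotoneOn (phiTilde n) (Icc n (Cn n)) := by
  intro a ha b hb hab
  rw [phiTilde_of_mem_Icc ha, phiTilde_of_mem_Icc hb]
  have hinc := mul_log_sub_mul_log_le (x := 1 + a) (y := 1 + b) (by linarith [ha.1]) (by linarith)
  have hlog : log (1 + b) ≤ 1 + 2 * log (1 + n) := by
    rw [← log_one_add_Cn (by linarith)]
    exact log_le_log (by linarith [hb.1]) (by linarith [hb.2])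
  nlinarith

theorem monotoneOn_phiTilde_Ici_Cn {n : ℝ} (hn : 0 ≤ n) :
    MonotoneOn (phiTilde n) (Ici (Cn n)) := by
  intro a ha b hb _
  rw [phiTilde_of_Cn_le hn ha, phiTilde_of_Cn_le hn hb]

theorem monotoneOn_phiTilde {n : ℝ} (hn : 0 ≤ n) : MonotoneOn (phiTilde n) (Ici 0) := by
  have hnC : n ≤ Cn n := (lt_Cn hn).le
  have hmid : MonotoneOn (phiTilde n) (Icc 0 (Cn n)) := by
    rw [← Icc_union_Icc_eq_Icc hn hnC]
    exact (monotoneOn_phiTilde_Icc_zero n).union_right (monotoneOn_phiTilde_Icc_Cn (by linarith))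
      (isGreatest_Icc hn) (isLeast_Icc hnC)
  rw [← Icc_union_Ici_eq_Ici (hn.trans hnC)]
  exact hmid.union_right (monotoneOn_phiTilde_Ici_Cn hn)
    (isGreatest_Icc (hn.trans hnC)) isLeast_Ici

/-- `φ̃_n` is nondecreasing on `[0,∞)`. -/
theorem phiTilde_monotone_in_y
    (n : ℝ) (hn : 0 < n) (y₁ y₂ : ℝ) (h0 : 0 ≤ y₁) (h12 : y₁ ≤ y₂) :
    phiTilde n y₁ ≤ phiTilde n y₂ :=
  monotoneOn_phiTilde hn.le h0 (h0.trans h12) h12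
end

section
/- For every real n > 0 and every y ≥ 0 one has φ̃_n(y) ≤ (1+y)·log(1+y). -/
namespace Real

theorem tangent_mul_log_le {a b : ℝ} (ha : 0 ≤ a) (hb : 0 < b) :
    b * log b + (log b + 1) * (a - b) ≤ a * log a := by
  rcases ha.eq_or_lt with rfl | ha
  · simp only [zero_mul]
    linarith
  have h := mul_le_mul_of_nonneg_left (log_le_sub_one_of_pos (div_pos hb ha)) ha.le
  rw [log_div hb.ne' ha.ne', mul_sub_one, mul_div_cancel₀ _ ha.ne'] at h
  linarith

end Real

theorem phiTilde_le_entropy_general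
    (n : ℝ) (hn : 0 < n) (y : ℝ) :
    phiTilde n y ≤ (1 + y) * Real.log (1 + y) := by
  unfold phiTilde
  split_ifs with hyn hyC
  · exact le_rfl
  · -- The middle formula is `2 T - f` with `T` the tangent line of `f x = (1 + x) log (1 + x)` at `n`.
    have tangent_le := Real.tangent_mul_log_le (a := 1 + y) (b := 1 + n) (by linarith) (by linarith)
    linarith
  · -- The constant is `C_n - 2 n - 1`, below `y ≤ (1 + y) log (1 + y)`.
    have entropy_ge := Real.self_sub_one_le_mul_log (x := 1 + y) (by linarith [not_le.mp hyn])
    have hCy : Cn n < y := not_le.mp hyC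
    unfold Cn at hCy
    linarith

/-- For every `n > 0` and `y ≥ 0`, `φ̃_n(y) ≤ (1+y)log(1+y)`. -/
theorem phiTilde_le_entropy
    (n : ℝ) (hn : 0 < n) (y : ℝ) (hy : 0 ≤ y) :
    phiTilde n y ≤ (1 + y) * Real.log (1 + y) :=
  phiTilde_le_entropy_general n hn y
end

section
/- Let T > 0, ε > 0. Let u : [0,T] × ℝ³ → ℝ³ be continuous, C¹ in the space variable, and ℤ³-periodic in x, and let ρ : [0,T] × ℝ³ → ℝ be continuous, C¹ in t on (0,T], C² in x, ℤ³-periodic in x, and satisfy pointwise on (0,T] × ℝ³ the regularized continuity equation ∂_t ρ + Σ_{i=1}^3 ∂_{x_i}(ρ u_i) = ε Σ_{i=1}^3 ∂²_{x_i} ρ. Let ρ₀ = ρ(0,·) and assume m₀ := inf_x ρ₀(x) > 0, M₀ := sup_x ρ₀(x) < ∞, and that g(t) := sup_x |div u(t,x)| is integrable on [0,T]. Then for all (t,x) ∈ [0,T] × ℝ³: m₀ · exp(−∫₀ᵗ g(s) ds) ≤ ρ(t,x) ≤ M₀ · exp(∫₀ᵗ g(s) ds). -/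
open MeasureTheory

open Set Filter Topology Real

/-!
Since `g` is merely integrable, `∫₀ᵗ g` need not be differentiable. By Vitali–Carathéodory it is
replaced, up to `e`, by the primitive `H` of an integrable `h` that grows at a rate `c > g t` just
to the left of every time `t`. For the lower bound, let `t` be the first time at which
`ρ(t, x) e^{H t}` drops to `m₀ - e`, at some point `x`. Then `x` is a spatial minimum of `ρ(t, ·)`
(by periodicity it suffices to look at the unit cube), so `∇ρ = 0` and `Δρ ≥ 0` there, and the
equation gives `∂ₜρ(t, x) ≥ -ρ div u ≥ -g t ρ(t, x)`. But `ρ(s, x) e^{H s} > ρ(t, x) e^{H t}` for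
`s < t`, which forces `∂ₜρ(t, x) ≤ -c ρ(t, x)`, a contradiction. Letting `e → 0` gives the lower
bound; the upper bound is the mirror argument at a spatial maximum.
-/

theorem LowerSemicontinuous.eventually_mul_sub_le_integral {h : ℝ → EReal}
    (hh : LowerSemicontinuous h) (hfin : ∀ᵐ x, h x < ⊤)
    (hint : Integrable fun x => (h x).toReal) {t c : ℝ} (hc : (c : EReal) < h t) :
    ∀ᶠ s in 𝓝[<] t, c * (t - s) ≤ ∫ τ in s..t, (h τ).toReal := by
  obtain ⟨r, hr, hball⟩ := Metric.eventually_nhds_iff.mp (hh t c hc)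
  filter_upwards [Ioo_mem_nhdsLT (sub_lt_self t hr)] with s hs
  have hlower : ∀ᵐ τ ∂volume.restrict (Icc s t), c ≤ (h τ).toReal := by
    filter_upwards [ae_restrict_of_ae hfin, ae_restrict_mem measurableSet_Icc] with τ hτ hτst
    have hcτ : (c : EReal) < h τ := hball <| by
      rw [Real.dist_eq, abs_lt]; constructor <;> linarith [hs.1, hτst.1, hτst.2]
    simpa using EReal.toReal_le_toReal hcτ.le (EReal.coe_ne_bot c) hτ.ne
  have := intervalIntegral.integral_mono_ae_restrict hs.2.le intervalIntegrable_const
    hint.intervalIntegrable hlower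
  simpa [mul_comm] using this

theorem exists_integral_majorant {g : ℝ → ℝ} {a b : ℝ}
    (hg : IntervalIntegrable g volume a b) {η : ℝ} (hη : 0 < η) :
    ∃ h : ℝ → ℝ, Integrable h ∧
      (∀ t ∈ Ioc a b, ∃ c, g t < c ∧ ∀ᶠ s in 𝓝[<] t, c * (t - s) ≤ ∫ τ in s..t, h τ) ∧
      ∀ t ∈ Icc a b, ∫ τ in a..t, h τ ≤ (∫ τ in a..t, g τ) + η := by
  set f := (Ioc a b).indicator g
  have hf : Integrable f := (integrable_indicator_iff measurableSet_Ioc).mpr hg.1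
  obtain ⟨h, hfh, hlsc, hint, hfin, hlt⟩ := exists_lt_lowerSemicontinuous_integral_lt f hf hη
  have hfh' : ∀ᵐ x, f x ≤ (h x).toReal := by
    filter_upwards [hfin] with x hx
    simpa using EReal.toReal_le_toReal (hfh x).le (EReal.coe_ne_bot _) hx.ne
  refine ⟨fun x => (h x).toReal, hint, fun t ht => ?_, fun t ht => ?_⟩
  · have hgh : (g t : EReal) < h t := by simpa [f, indicator_of_mem ht] using hfh t
    obtain ⟨c, hgc, hch⟩ := EReal.exists_between_coe_real hgh
    exact ⟨c, EReal.coe_lt_coe_iff.mp hgc, hlsc.eventually_mul_sub_le_integral hfin hint hch⟩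
  · have hgf : ∫ τ in a..t, g τ = ∫ τ in a..t, f τ := by
      refine intervalIntegral.integral_congr_ae (ae_of_all _ fun τ hτ => ?_)
      rw [uIoc_of_le ht.1] at hτ
      have hτ' : τ ∈ Ioc a b := ⟨hτ.1, hτ.2.trans ht.2⟩
      simp [f, hτ']
    have hsub : ∫ τ in a..t, ((h τ).toReal - f τ) ≤ ∫ τ, ((h τ).toReal - f τ) := by
      rw [intervalIntegral.integral_of_le ht.1]
      refine setIntegral_le_integral (hint.sub hf) ?_
      filter_upwards [hfh'] with x hx
      simpa using hx
    rw [intervalIntegral.integral_sub hint.intervalIntegrable hf.intervalIntegrable,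
      integral_sub hint hf] at hsub
    linarith

theorem exists_first_le_of_continuousOn {X : Type*} [TopologicalSpace X] {K : Set X}
    (hK : IsCompact K) {w : ℝ → X → ℝ} {a b m : ℝ}
    (hw : ContinuousOn (fun p : ℝ × X => w p.1 p.2) (Icc a b ×ˢ K))
    (ha : ∀ x ∈ K, m < w a x) (hle : ∃ t ∈ Icc a b, ∃ x ∈ K, w t x ≤ m) :
    ∃ t ∈ Ioc a b, ∃ x ∈ K, w t x = m ∧ (∀ y ∈ K, m ≤ w t y) ∧
      ∀ s ∈ Ico a t, ∀ y ∈ K, m < w s y := by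
  set C := Icc a b ×ˢ K ∩ (fun p : ℝ × X => w p.1 p.2) ⁻¹' Iic m
  have hC : IsCompact C :=
    hw.lowerSemicontinuousOn.isCompact_inter_preimage_Iic (isCompact_Icc.prod hK) m
  obtain ⟨t, ht, x, hx, hwx⟩ := hle
  obtain ⟨⟨t, x⟩, ⟨⟨ht, hx⟩, hwx⟩, hfirst⟩ :=
    hC.exists_isMinOn ⟨(t, x), ⟨ht, hx⟩, hwx⟩ continuous_fst.continuousOn
  have hbefore : ∀ s ∈ Ico a t, ∀ y ∈ K, m < w s y := fun s hs y hy =>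
    lt_of_not_ge fun hsy =>
      hs.2.not_ge <| hfirst (a := (s, y)) ⟨⟨⟨hs.1, hs.2.le.trans ht.2⟩, hy⟩, hsy⟩
  have hat : a < t := ht.1.lt_of_ne fun hat => (hwx.trans_lt (hat ▸ ha x hx)).false
  have hlim : ∀ y ∈ K, m ≤ w t y := fun y hy =>
    ContinuousWithinAt.closure_le (f := fun _ => m) (g := fun s => w s y)
      (by rw [closure_Ico hat.ne]; exact ⟨hat.le, le_rfl⟩) continuousWithinAt_const
      ((hw.comp (Continuous.prodMk_left y).continuousOn fun s hs => ⟨hs, hy⟩) t ht |>.mono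
        fun s hs => ⟨hs.1, hs.2.le.trans ht.2⟩)
      fun s hs => (hbefore s hs y hy).le
  exact ⟨t, ⟨hat, ht.2⟩, x, hx, le_antisymm hwx (hlim x hx), hlim, hbefore⟩

theorem le_neg_mul_of_mul_exp_le {f E : ℝ → ℝ} {t c D : ℝ}
    (hf : HasDerivWithinAt f D (Iio t) t) (hft : 0 ≤ f t)
    (hE : ∀ᶠ s in 𝓝[<] t, c * (t - s) ≤ E t - E s)
    (hmin : ∀ᶠ s in 𝓝[<] t, f t * exp (E t) ≤ f s * exp (E s)) : D ≤ -(c * f t) := by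
  refine le_of_tendsto ((hasDerivWithinAt_iff_tendsto_slope' self_notMem_Iio).mp hf) ?_
  filter_upwards [hE, hmin, self_mem_nhdsWithin] with s hEs hs hst
  have hst : s - t < 0 := sub_neg.mpr hst
  have hdecay : f t * (1 + c * (t - s)) ≤ f s := calc
    f t * (1 + c * (t - s)) ≤ f t * exp (E t - E s) := by
      gcongr; linarith [add_one_le_exp (E t - E s)]
    _ ≤ f s := by
      rw [exp_sub, mul_div_assoc', div_le_iff₀ (exp_pos _)]; exact hs
  rw [slope_def_field, div_le_iff_of_neg hst]
  linarith

theorem mul_le_of_mul_exp_neg_le {f E : ℝ → ℝ} {t c D : ℝ}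
    (hf : HasDerivWithinAt f D (Iio t) t) (hft : 0 < f t)
    (hE : ∀ᶠ s in 𝓝[<] t, c * (t - s) ≤ E t - E s)
    (hmax : ∀ᶠ s in 𝓝[<] t, f s * exp (-E s) ≤ f t * exp (-E t)) : c * f t ≤ D := by
  have hcont : Tendsto (fun s => c * f s) (𝓝[<] t) (𝓝 (c * f t)) :=
    (hf.continuousWithinAt.tendsto).const_mul c
  refine le_of_tendsto_of_tendsto hcont
    ((hasDerivWithinAt_iff_tendsto_slope' self_notMem_Iio).mp hf) ?_
  filter_upwards [hE, hmax, self_mem_nhdsWithin,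
    hf.continuousWithinAt.eventually (lt_mem_nhds hft)] with s hEs hs hst hfs
  have hst : s - t < 0 := sub_neg.mpr hst
  have hgrowth : f s * (1 + c * (t - s)) ≤ f t := calc
    f s * (1 + c * (t - s)) ≤ f s * exp (E t - E s) := by
      gcongr; linarith [add_one_le_exp (E t - E s)]
    _ = f s * exp (-E s) * exp (E t) := by rw [mul_assoc, ← exp_add, neg_add_eq_sub]
    _ ≤ f t * exp (-E t) * exp (E t) := by gcongr
    _ = f t := by rw [mul_assoc, ← exp_add, neg_add_cancel, exp_zero, mul_one]
  rw [slope_def_field, le_div_iff_of_neg hst]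
  linarith

section ComparisonPrinciple

variable {X : Type*} [TopologicalSpace X] {K : Set X} {ρ : ℝ → X → ℝ} {g h : ℝ → ℝ}
  {a b : ℝ}

theorem lt_mul_exp_integral_of_majorant (hK : IsCompact K)
    (hρ : ContinuousOn (fun p : ℝ × X => ρ p.1 p.2) (Icc a b ×ˢ K))
    (hK_range : ∀ t ∈ Icc a b, ∀ x, ∃ y ∈ K, ρ t y = ρ t x)
    (hderiv : ∀ t ∈ Ioc a b, ∀ x, (∀ y, ρ t x ≤ ρ t y) → 0 < ρ t x →
      ∃ D, HasDerivWithinAt (fun s => ρ s x) D (Iio t) t ∧ -(g t * ρ t x) ≤ D)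
    (hh : Integrable h)
    (hgh : ∀ t ∈ Ioc a b, ∃ c, g t < c ∧
      ∀ᶠ s in 𝓝[<] t, c * (t - s) ≤ ∫ τ in s..t, h τ)
    {m : ℝ} (hm : 0 < m) (hinit : ∀ x ∈ K, m < ρ a x) :
    ∀ t ∈ Icc a b, ∀ x ∈ K, m < ρ t x * exp (∫ τ in a..t, h τ) := by
  set E := fun s => ∫ τ in a..s, h τ
  by_contra! hle
  have hw : ContinuousOn (fun p : ℝ × X => ρ p.1 p.2 * exp (E p.1)) (Icc a b ×ˢ K) :=
    hρ.mul ((hh.continuous_primitive a).comp continuous_fst).rexp.continuousOn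
  obtain ⟨t, ht, x, hx, hwx, hmin, hbefore⟩ :=
    exists_first_le_of_continuousOn hK hw (by simpa [E] using hinit) hle
  have hpos : 0 < ρ t x := pos_of_mul_pos_left (hwx ▸ hm) (exp_pos _).le
  have hglobal : ∀ y, ρ t x ≤ ρ t y := fun y => by
    obtain ⟨z, hz, hzy⟩ := hK_range t (Ioc_subset_Icc_self ht) y
    rw [← hzy]
    exact le_of_mul_le_mul_right (hwx ▸ hmin z hz) (exp_pos _)
  obtain ⟨D, hD, hgD⟩ := hderiv t ht x hglobal hpos
  obtain ⟨c, hgc, hc⟩ := hgh t ht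
  have hDc : D ≤ -(c * ρ t x) := by
    refine le_neg_mul_of_mul_exp_le (E := E) hD hpos.le (hc.mono fun s hs => ?_) ?_
    · rwa [intervalIntegral.integral_interval_sub_left hh.intervalIntegrable
        hh.intervalIntegrable]
    · filter_upwards [Ioo_mem_nhdsLT ht.1] with s hs
      exact hwx.symm ▸ (hbefore s ⟨hs.1.le, hs.2⟩ x hx).le
  nlinarith [mul_lt_mul_of_pos_right hgc hpos]

theorem mul_exp_neg_integral_le (hK : IsCompact K)
    (hρ : ContinuousOn (fun p : ℝ × X => ρ p.1 p.2) (Icc a b ×ˢ K))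
    (hK_range : ∀ t ∈ Icc a b, ∀ x, ∃ y ∈ K, ρ t y = ρ t x)
    (hg : IntervalIntegrable g volume a b)
    (hderiv : ∀ t ∈ Ioc a b, ∀ x, (∀ y, ρ t x ≤ ρ t y) → 0 < ρ t x →
      ∃ D, HasDerivWithinAt (fun s => ρ s x) D (Iio t) t ∧ -(g t * ρ t x) ≤ D)
    {m : ℝ} (hm : 0 < m) (hinit : ∀ x, m ≤ ρ a x) :
    ∀ t ∈ Icc a b, ∀ x, m * exp (-∫ s in a..t, g s) ≤ ρ t x := by
  intro t ht x
  obtain ⟨y, hy, hyx⟩ := hK_range t ht x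
  rw [← hyx]
  set G := ∫ s in a..t, g s
  suffices hε : ∀ e ∈ Ioo 0 m, (m - e) * exp (-(G + e)) ≤ ρ t y by
    have hcont : Continuous fun e => (m - e) * exp (-(G + e)) := by fun_prop
    have h0 : (0 : ℝ) ∈ closure (Ioo 0 m) := by simp [closure_Ioo hm.ne, hm.le]
    simpa using hcont.continuousWithinAt.closure_le h0 continuousWithinAt_const hε
  intro e he
  obtain ⟨h, hh, hgh, hmaj⟩ := exists_integral_majorant hg he.1
  have hbarrier := lt_mul_exp_integral_of_majorant hK hρ hK_range hderiv hh hgh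
    (sub_pos.mpr he.2) (fun x _ => (sub_lt_self m he.1).trans_le (hinit x)) t ht y hy
  calc (m - e) * exp (-(G + e)) ≤ (m - e) * exp (-∫ τ in a..t, h τ) := by
        gcongr
        · linarith [he.2]
        · exact hmaj t ht
    _ ≤ ρ t y := by
        rw [exp_neg, ← div_eq_mul_inv, div_le_iff₀ (exp_pos _)]; exact hbarrier.le

theorem mul_exp_neg_integral_lt_of_majorant (hK : IsCompact K)
    (hρ : ContinuousOn (fun p : ℝ × X => ρ p.1 p.2) (Icc a b ×ˢ K))
    (hK_range : ∀ t ∈ Icc a b, ∀ x, ∃ y ∈ K, ρ t y = ρ t x)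
    (hderiv : ∀ t ∈ Ioc a b, ∀ x, (∀ y, ρ t y ≤ ρ t x) → 0 < ρ t x →
      ∃ D, HasDerivWithinAt (fun s => ρ s x) D (Iio t) t ∧ D ≤ g t * ρ t x)
    (hh : Integrable h)
    (hgh : ∀ t ∈ Ioc a b, ∃ c, g t < c ∧
      ∀ᶠ s in 𝓝[<] t, c * (t - s) ≤ ∫ τ in s..t, h τ)
    {M : ℝ} (hM : 0 < M) (hinit : ∀ x ∈ K, ρ a x < M) :
    ∀ t ∈ Icc a b, ∀ x ∈ K, ρ t x * exp (-∫ τ in a..t, h τ) < M := by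
  set E := fun s => ∫ τ in a..s, h τ
  by_contra! hle
  have hw : ContinuousOn (fun p : ℝ × X => -(ρ p.1 p.2 * exp (-E p.1))) (Icc a b ×ˢ K) :=
    (hρ.mul ((hh.continuous_primitive a).comp continuous_fst).neg.rexp.continuousOn).neg
  obtain ⟨t, ht, x, hx, hwx, hmax, hbefore⟩ := exists_first_le_of_continuousOn
    (w := fun t x => -(ρ t x * exp (-E t))) (m := -M) hK hw (by simpa [E] using hinit)
    (by simpa using hle)
  simp only [neg_lt_neg_iff, neg_le_neg_iff, neg_inj] at hwx hmax hbefore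
  have hpos : 0 < ρ t x := pos_of_mul_pos_left (hwx ▸ hM) (exp_pos _).le
  have hglobal : ∀ y, ρ t y ≤ ρ t x := fun y => by
    obtain ⟨z, hz, hzy⟩ := hK_range t (Ioc_subset_Icc_self ht) y
    rw [← hzy]
    exact le_of_mul_le_mul_right (hwx ▸ hmax z hz) (exp_pos _)
  obtain ⟨D, hD, hDg⟩ := hderiv t ht x hglobal hpos
  obtain ⟨c, hgc, hc⟩ := hgh t ht
  have hcD : c * ρ t x ≤ D := by
    refine mul_le_of_mul_exp_neg_le (E := E) hD hpos (hc.mono fun s hs => ?_) ?_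
    · rwa [intervalIntegral.integral_interval_sub_left hh.intervalIntegrable
        hh.intervalIntegrable]
    · filter_upwards [Ioo_mem_nhdsLT ht.1] with s hs
      exact hwx.symm ▸ (hbefore s ⟨hs.1.le, hs.2⟩ x hx).le
  nlinarith [mul_lt_mul_of_pos_right hgc hpos]

theorem le_mul_exp_integral (hK : IsCompact K)
    (hρ : ContinuousOn (fun p : ℝ × X => ρ p.1 p.2) (Icc a b ×ˢ K))
    (hK_range : ∀ t ∈ Icc a b, ∀ x, ∃ y ∈ K, ρ t y = ρ t x)
    (hg : IntervalIntegrable g volume a b)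
    (hderiv : ∀ t ∈ Ioc a b, ∀ x, (∀ y, ρ t y ≤ ρ t x) → 0 < ρ t x →
      ∃ D, HasDerivWithinAt (fun s => ρ s x) D (Iio t) t ∧ D ≤ g t * ρ t x)
    {M : ℝ} (hM : 0 < M) (hinit : ∀ x, ρ a x ≤ M) :
    ∀ t ∈ Icc a b, ∀ x, ρ t x ≤ M * exp (∫ s in a..t, g s) := by
  intro t ht x
  obtain ⟨y, hy, hyx⟩ := hK_range t ht x
  rw [← hyx]
  set G := ∫ s in a..t, g s
  suffices hε : ∀ e ∈ Ioi 0, ρ t y ≤ (M + e) * exp (G + e) by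
    have hcont : Continuous fun e => (M + e) * exp (G + e) := by fun_prop
    have h0 : (0 : ℝ) ∈ closure (Ioi 0) := by simp
    simpa using continuousWithinAt_const.closure_le h0 hcont.continuousWithinAt hε
  intro e he
  obtain ⟨h, hh, hgh, hmaj⟩ := exists_integral_majorant hg he
  have hbarrier := mul_exp_neg_integral_lt_of_majorant hK hρ hK_range hderiv hh hgh
    (add_pos hM he) (fun x _ => (hinit x).trans_lt (lt_add_of_pos_right M he)) t ht y hy
  calc ρ t y ≤ (M + e) * exp (∫ τ in a..t, h τ) := by
        rw [← div_le_iff₀ (exp_pos _), div_eq_mul_inv, ← exp_neg]; exact hbarrier.le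
    _ ≤ (M + e) * exp (G + e) := by
        gcongr
        · linarith [hM, mem_Ioi.mp he]
        · exact hmaj t ht

end ComparisonPrinciple

theorem exists_mem_Icc_eq_of_forall_add_intCast {ι β : Type*} {f : (ι → ℝ) → β}
    (hf : ∀ (x : ι → ℝ) (k : ι → ℤ), f (x + fun i => (k i : ℝ)) = f x) (x : ι → ℝ) :
    ∃ y ∈ Icc (0 : ι → ℝ) 1, f y = f x :=
  ⟨fun i => Int.fract (x i), ⟨fun _ => Int.fract_nonneg _, fun _ => (Int.fract_lt_one _).le⟩,
    (hf _ fun i => ⌊x i⌋).symm.trans (congrArg f (funext fun i => Int.fract_add_floor (x i)))⟩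

theorem IsLocalMin.deriv_deriv_nonneg {f : ℝ → ℝ} {x : ℝ} (h : IsLocalMin f x)
    (hf : ContinuousAt f x) : 0 ≤ deriv (deriv f) x := by
  by_contra! hneg
  have hconst : f =ᶠ[𝓝 x] fun _ => f x := by
    filter_upwards [h, isLocalMax_of_deriv_deriv_neg hneg h.deriv_eq_zero hf] with y hmin hmax
    exact le_antisymm hmax hmin
  have : deriv (deriv f) x = 0 := by
    rw [(hconst.deriv).deriv_eq]; simp
  exact hneg.ne this

theorem IsLocalMax.deriv_deriv_nonpos {f : ℝ → ℝ} {x : ℝ} (h : IsLocalMax f x)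
    (hf : ContinuousAt f x) : deriv (deriv f) x ≤ 0 := by
  simpa [deriv.neg'] using h.neg.deriv_deriv_nonneg hf.neg

local notation "ℝ³" => Fin 3 → ℝ

noncomputable def laplacian (f : ℝ³ → ℝ) (x : ℝ³) : ℝ :=
  ∑ i, pd i (pd i f) x

noncomputable def divergence (v : ℝ³ → ℝ³) (x : ℝ³) : ℝ :=
  ∑ i, pd i (fun y => v y i) x

section PartialDerivatives

variable {f : ℝ³ → ℝ} {v : ℝ³ → ℝ³} {z : ℝ³}

theorem hasDerivAt_comp_add_smul_single (i : Fin 3) {s : ℝ}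
    (hf : DifferentiableAt ℝ f (z + s • Pi.single i 1)) :
    HasDerivAt (fun s : ℝ => f (z + s • Pi.single i 1)) (pd i f (z + s • Pi.single i 1)) s :=
  hf.hasFDerivAt.comp_hasDerivAt s
    ((((hasDerivAt_id s).smul_const _).const_add z).congr_deriv (one_smul _ _))

theorem pd_pd_eq_deriv_deriv (hf : ContDiff ℝ 2 f) (z : ℝ³) (i : Fin 3) :
    pd i (pd i f) z = deriv (deriv fun s : ℝ => f (z + s • Pi.single i 1)) 0 := by
  have hpd : deriv (fun s : ℝ => f (z + s • Pi.single i 1)) =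
      fun s => pd i f (z + s • Pi.single i 1) :=
    funext fun s => (hasDerivAt_comp_add_smul_single i (hf.differentiable two_ne_zero _)).deriv
  have hpd_diff : Differentiable ℝ (pd i f) :=
    ((hf.fderiv_right one_add_one_eq_two.le).clm_apply contDiff_const).differentiable one_ne_zero
  rw [hpd, (hasDerivAt_comp_add_smul_single i (hpd_diff _)).deriv, zero_smul, add_zero]

theorem pd_pd_nonneg_of_isLocalMin (hf : ContDiff ℝ 2 f) (h : IsLocalMin f z) (i : Fin 3) :
    0 ≤ pd i (pd i f) z := by
  have hline : IsLocalMin (fun s : ℝ => f (z + s • Pi.single i 1)) 0 :=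
    IsLocalMin.comp_continuous (g := fun s : ℝ => z + s • Pi.single i 1) (by simpa using h)
      (by fun_prop)
  rw [pd_pd_eq_deriv_deriv hf]
  exact hline.deriv_deriv_nonneg (hf.continuous.comp (by fun_prop)).continuousAt

theorem pd_pd_nonpos_of_isLocalMax (hf : ContDiff ℝ 2 f) (h : IsLocalMax f z) (i : Fin 3) :
    pd i (pd i f) z ≤ 0 := by
  have hline : IsLocalMax (fun s : ℝ => f (z + s • Pi.single i 1)) 0 :=
    IsLocalMax.comp_continuous (g := fun s : ℝ => z + s • Pi.single i 1) (by simpa using h)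
      (by fun_prop)
  rw [pd_pd_eq_deriv_deriv hf]
  exact hline.deriv_deriv_nonpos (hf.continuous.comp (by fun_prop)).continuousAt

theorem divergence_smul_of_fderiv_eq_zero (hf : DifferentiableAt ℝ f z)
    (hv : DifferentiableAt ℝ v z) (hz : fderiv ℝ f z = 0) :
    divergence (fun y => f y • v y) z = f z * divergence v z := by
  simp only [divergence, pd, Finset.mul_sum, Pi.smul_apply, smul_eq_mul]
  refine Finset.sum_congr rfl fun i _ => ?_
  rw [fderiv_fun_mul hf (differentiableAt_pi.mp hv i), hz]
  simp

theorem neg_mul_divergence_le_of_isLocalMin {ε : ℝ} (hε : 0 ≤ ε) (hf : ContDiff ℝ 2 f)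
    (hv : ContDiff ℝ 1 v) (h : IsLocalMin f z) :
    -(f z * divergence v z) ≤ ε * laplacian f z - divergence (fun y => f y • v y) z := by
  rw [divergence_smul_of_fderiv_eq_zero (hf.differentiable two_ne_zero z)
    (hv.differentiable one_ne_zero z) h.fderiv_eq_zero]
  have : 0 ≤ laplacian f z := Finset.sum_nonneg fun i _ => pd_pd_nonneg_of_isLocalMin hf h i
  nlinarith

theorem le_neg_mul_divergence_of_isLocalMax {ε : ℝ} (hε : 0 ≤ ε) (hf : ContDiff ℝ 2 f)
    (hv : ContDiff ℝ 1 v) (h : IsLocalMax f z) :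
    ε * laplacian f z - divergence (fun y => f y • v y) z ≤ -(f z * divergence v z) := by
  rw [divergence_smul_of_fderiv_eq_zero (hf.differentiable two_ne_zero z)
    (hv.differentiable one_ne_zero z) h.fderiv_eq_zero]
  have : laplacian f z ≤ 0 := Finset.sum_nonpos fun i _ => pd_pd_nonpos_of_isLocalMax hf h i
  nlinarith

end PartialDerivatives

theorem regularized_continuity_maximum_principle_general
    (T ε : ℝ) (hε : 0 < ε)
    (u : ℝ → (Fin 3 → ℝ) → Fin 3 → ℝ) (ρ : ℝ → (Fin 3 → ℝ) → ℝ)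
    (g : ℝ → ℝ) (m0 M0 : ℝ)
    (hu_x : ∀ t ∈ Set.Icc (0 : ℝ) T, ContDiff ℝ 1 (u t))
    (hρ_cont : ContinuousOn (fun p : ℝ × (Fin 3 → ℝ) => ρ p.1 p.2)
      (Set.Icc 0 T ×ˢ Set.univ))
    (hρ_x : ∀ t ∈ Set.Icc (0 : ℝ) T, ContDiff ℝ 2 (ρ t))
    (hρ_per : ∀ t ∈ Set.Icc (0 : ℝ) T, ∀ (x : Fin 3 → ℝ) (k : Fin 3 → ℤ),
      ρ t (x + fun i => (k i : ℝ)) = ρ t x)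
    (hpde : ∀ t ∈ Set.Ioc (0 : ℝ) T, ∀ x : Fin 3 → ℝ,
      HasDerivAt (fun s => ρ s x)
        (ε * (∑ i, pd i (fun y => pd i (ρ t) y) x)
          - ∑ i, pd i (fun y => ρ t y * u t y i) x) t)
    (hm0 : 0 < m0) (hlow : ∀ x, m0 ≤ ρ 0 x) (hhigh : ∀ x, ρ 0 x ≤ M0)
    (hg : ∀ t ∈ Set.Icc (0 : ℝ) T,
      IsLUB (Set.range fun x : Fin 3 → ℝ => |∑ i, pd i (fun y => u t y i) x|) (g t))
    (hgint : IntervalIntegrable g volume 0 T) :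
    ∀ t ∈ Set.Icc (0 : ℝ) T, ∀ x : Fin 3 → ℝ,
      m0 * Real.exp (-(∫ s in (0 : ℝ)..t, g s)) ≤ ρ t x ∧
      ρ t x ≤ M0 * Real.exp (∫ s in (0 : ℝ)..t, g s) := by
  have hdiv : ∀ t ∈ Ioc 0 T, ∀ x, |divergence (u t) x| ≤ g t := fun t ht x =>
    (hg t (Ioc_subset_Icc_self ht)).1 ⟨x, rfl⟩
  have hρ_cube : ContinuousOn (fun p : ℝ × ℝ³ => ρ p.1 p.2) (Icc 0 T ×ˢ Icc 0 1) :=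
    hρ_cont.mono (prod_mono subset_rfl (subset_univ _))
  have hcube : ∀ t ∈ Icc 0 T, ∀ x, ∃ y ∈ Icc (0 : ℝ³) 1, ρ t y = ρ t x := fun t ht =>
    exists_mem_Icc_eq_of_forall_add_intCast (hρ_per t ht)
  intro t ht x
  constructor
  · refine mul_exp_neg_integral_le isCompact_Icc hρ_cube hcube hgint
      (fun s hs y hmin hpos => ⟨_, (hpde s hs y).hasDerivWithinAt, ?_⟩) hm0 hlow t ht x
    change -(g s * ρ s y) ≤ ε * laplacian (ρ s) y - divergence (fun z => ρ s z • u s z) y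
    have := neg_mul_divergence_le_of_isLocalMin hε.le (hρ_x s (Ioc_subset_Icc_self hs))
      (hu_x s (Ioc_subset_Icc_self hs)) (Eventually.of_forall hmin)
    nlinarith [(abs_le.mp (hdiv s hs y)).2]
  · refine le_mul_exp_integral isCompact_Icc hρ_cube hcube hgint
      (fun s hs y hmax hpos => ⟨_, (hpde s hs y).hasDerivWithinAt, ?_⟩)
      (hm0.trans_le ((hlow 0).trans (hhigh 0))) hhigh t ht x
    change ε * laplacian (ρ s) y - divergence (fun z => ρ s z • u s z) y ≤ g s * ρ s y
    have := le_neg_mul_divergence_of_isLocalMax hε.le (hρ_x s (Ioc_subset_Icc_self hs))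
      (hu_x s (Ioc_subset_Icc_self hs)) (Eventually.of_forall hmax)
    nlinarith [(abs_le.mp (hdiv s hs y)).1]

/-- Maximum-principle bound of Lemma 2.1 for the regularized continuity equation
`∂_t ρ + div(ρ u) = ε Δρ` on the torus: for `0 ≤ t ≤ T`,
`m₀ exp(−∫₀ᵗ g) ≤ ρ(t,x) ≤ M₀ exp(∫₀ᵗ g)`, where `g(t) = sup_x |div u(t,x)|`. -/
theorem regularized_continuity_maximum_principle
    (T ε : ℝ) (hT : 0 < T) (hε : 0 < ε)
    (u : ℝ → (Fin 3 → ℝ) → Fin 3 → ℝ) (ρ : ℝ → (Fin 3 → ℝ) → ℝ)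
    (g : ℝ → ℝ) (m0 M0 : ℝ)
    (hu_cont : ContinuousOn (fun p : ℝ × (Fin 3 → ℝ) => u p.1 p.2)
      (Set.Icc 0 T ×ˢ Set.univ))
    (hu_x : ∀ t ∈ Set.Icc (0 : ℝ) T, ContDiff ℝ 1 (u t))
    (hu_per : ∀ t ∈ Set.Icc (0 : ℝ) T, ∀ (x : Fin 3 → ℝ) (k : Fin 3 → ℤ),
      u t (x + fun i => (k i : ℝ)) = u t x)
    (hρ_cont : ContinuousOn (fun p : ℝ × (Fin 3 → ℝ) => ρ p.1 p.2)
      (Set.Icc 0 T ×ˢ Set.univ))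
    (hρ_x : ∀ t ∈ Set.Icc (0 : ℝ) T, ContDiff ℝ 2 (ρ t))
    (hρ_per : ∀ t ∈ Set.Icc (0 : ℝ) T, ∀ (x : Fin 3 → ℝ) (k : Fin 3 → ℤ),
      ρ t (x + fun i => (k i : ℝ)) = ρ t x)
    (hpde : ∀ t ∈ Set.Ioc (0 : ℝ) T, ∀ x : Fin 3 → ℝ,
      HasDerivAt (fun s => ρ s x)
        (ε * (∑ i, pd i (fun y => pd i (ρ t) y) x)
          - ∑ i, pd i (fun y => ρ t y * u t y i) x) t)
    (hm0 : 0 < m0) (hlow : ∀ x, m0 ≤ ρ 0 x) (hhigh : ∀ x, ρ 0 x ≤ M0)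
    (hg : ∀ t ∈ Set.Icc (0 : ℝ) T,
      IsLUB (Set.range fun x : Fin 3 → ℝ => |∑ i, pd i (fun y => u t y i) x|) (g t))
    (hgint : IntervalIntegrable g volume 0 T) :
    ∀ t ∈ Set.Icc (0 : ℝ) T, ∀ x : Fin 3 → ℝ,
      m0 * Real.exp (-(∫ s in (0 : ℝ)..t, g s)) ≤ ρ t x ∧
      ρ t x ≤ M0 * Real.exp (∫ s in (0 : ℝ)..t, g s) :=
  regularized_continuity_maximum_principle_general T ε hε u ρ g m0 M0 hu_x hρ_cont hρ_x hρ_per hpde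
    hm0 hlow hhigh hg hgint
end
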